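/- arXiv:1705.02582 — 4 statements merged into one kernel-verified Lean document; each statement's English description precedes it below -/
import Mathlib

section
/- Let Γ = (ω^ω, E) be a graph whose vertex set is the Baire space ω^ω, such that the edge relation E is a closed subset of ω^ω × ω^ω, and let 𝔭 : ω^ω → {pⁿ : p prime, n ≥ 1} ∪ {∞} be a coloring such that 𝔭(η) depends only on η(0). Then the graph product G = G(Γ, 𝔭) admits a left-invariant separable group ultrametric which extends the standard metric on the Baire space ω^ω (identifying each η ∈ ω^ω with the corresponding generator of G). -/
/-!
Let `K n` be the normal subgroup generated by the elements `η⁻¹ν` with `η, ν` agreeing below `n`.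
These form a decreasing chain, and `d(g, h) = 2⁻ⁿ`, for the least `n` with `g⁻¹h ∉ K n`, is a
left-invariant ultrametric as soon as `⋂ K n = 1`. The intersection is trivial: if `g` is written
with a finite set `T` of letters, closedness of `E` gives a depth `N` at which the cylinders
around the letters of `T` are pairwise disjoint and adjacent only when their centres are, so
collapsing each such cylinder to its centre and every other generator to `1` is a retraction that
kills `K N` and fixes `g`. Counting letters of the depth-`(m+1)` cylinder around `η` modulo `𝔭(η)`
shows `η⁻¹ν ∉ K (m+1)` when `η, ν` first differ at `m`, so `d` extends the Baire metric. Finally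
each `G / K n` is generated by the images of the countably many prefixes of length `n`, which
gives separability.
-/

/-- The defining relations of the graph product of cyclic groups `G(Γ, 𝔭)`:
for each vertex `a` the relation `a ^ 𝔭(a) = 1` (where the value `𝔭(a) = 0`
encodes `∞`, i.e. no relation), and for each edge `a E b` the commutator
relation `a b a⁻¹ b⁻¹ = 1`. -/
def graphProdRels {V : Type*} (E : V → V → Prop) (p : V → ℕ) : Set (FreeGroup V) :=
  {w | ∃ a : V, w = FreeGroup.of a ^ p a} ∪
  {w | ∃ a b : V, E a b ∧
    w = FreeGroup.of a * FreeGroup.of b * (FreeGroup.of a)⁻¹ * (FreeGroup.of b)⁻¹}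

/-- The graph product of cyclic groups `G(Γ, 𝔭)`. -/
abbrev GraphProd {V : Type*} (E : V → V → Prop) (p : V → ℕ) : Type _ :=
  PresentedGroup (graphProdRels E p)

/-- The generator of `G(Γ, 𝔭)` corresponding to the vertex `v`. -/
def GraphProd.gen {V : Type*} (E : V → V → Prop) (p : V → ℕ) (v : V) : GraphProd E p :=
  PresentedGroup.of v

open Filter PiNat

section Cylinders

variable {E E' : ℕ → Type*} [∀ n, TopologicalSpace (E n)] [∀ n, DiscreteTopology (E n)]
  [∀ n, TopologicalSpace (E' n)] [∀ n, DiscreteTopology (E' n)]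

theorem PiNat.eventually_cylinder_subset {x : ∀ n, E n} {U : Set (∀ n, E n)} (hU : U ∈ nhds x) :
    ∀ᶠ n in atTop, cylinder x n ⊆ U := by
  obtain ⟨_, ⟨y, n, rfl⟩, hx, hsub⟩ := (isTopologicalBasis_cylinders E).mem_nhds_iff.1 hU
  rw [← mem_cylinder_iff_eq.1 hx] at hsub
  exact eventually_atTop.2 ⟨n, fun _ hk => (cylinder_anti x hk).trans hsub⟩

theorem PiNat.eventually_cylinder_prod_subset {x : ∀ n, E n} {y : ∀ n, E' n}
    {U : Set ((∀ n, E n) × (∀ n, E' n))} (hU : U ∈ nhds (x, y)) :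
    ∀ᶠ n in atTop, cylinder x n ×ˢ cylinder y n ⊆ U := by
  obtain ⟨u, hu, v, hv, huv⟩ := mem_nhds_prod_iff.1 hU
  filter_upwards [eventually_cylinder_subset hu, eventually_cylinder_subset hv] with n hun hvn
  exact (Set.prod_mono hun hvn).trans huv

end Cylinders

theorem exists_cylinder_depth_separating {E : (ℕ → ℕ) → (ℕ → ℕ) → Prop}
    (hE : IsClosed {q : (ℕ → ℕ) × (ℕ → ℕ) | E q.1 q.2}) (T : Finset (ℕ → ℕ)) :
    ∃ N, 0 < N ∧ (∀ s ∈ T, ∀ t ∈ T, t ∈ cylinder s N → t = s) ∧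
      ∀ s ∈ T, ∀ t ∈ T, ∀ α ∈ cylinder s N, ∀ β ∈ cylinder t N, E α β → E s t := by
  have hsep (s t : ℕ → ℕ) : ∀ᶠ N in atTop, t ∈ cylinder s N → t = s := by
    by_cases hts : t = s
    · exact Eventually.of_forall fun _ _ => hts
    filter_upwards [eventually_cylinder_subset (isOpen_compl_singleton.mem_nhds (Ne.symm hts))]
      with N hN ht
    exact absurd rfl (hN ht)
  have hadj (s t : ℕ → ℕ) :
      ∀ᶠ N in atTop, ∀ α ∈ cylinder s N, ∀ β ∈ cylinder t N, E α β → E s t := by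
    by_cases hst : E s t
    · exact Eventually.of_forall fun _ _ _ _ _ _ => hst
    filter_upwards [eventually_cylinder_prod_subset (hE.isOpen_compl.mem_nhds hst)]
      with N hN α hα β hβ hαβ
    exact absurd hαβ (hN (Set.mk_mem_prod hα hβ))
  obtain ⟨N, hN, hT⟩ := ((eventually_gt_atTop 0).and ((eventually_all_finset T).2 fun s _ =>
    (eventually_all_finset T).2 fun t _ => (hsep s t).and (hadj s t))).exists
  exact ⟨N, hN, fun s hs t ht => (hT s hs t ht).1, fun s hs t ht => (hT s hs t ht).2⟩

section Filtration

attribute [local instance] PiNat.dist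

theorem PiNat.dist_congr {E E' : ℕ → Type*} {x y : ∀ n, E n} {x' y' : ∀ n, E' n}
    (h : ∀ n, x n = y n ↔ x' n = y' n) : dist x y = dist x' y' := by
  have hxy : x = y ↔ x' = y' := by simp only [funext_iff, h]
  by_cases hne : x = y
  · rw [hne, hxy.1 hne, PiNat.dist_self, PiNat.dist_self]
  have hne' : x' ≠ y' := mt hxy.2 hne
  rw [dist_eq_of_ne hne, dist_eq_of_ne hne']
  congr 1
  apply le_antisymm
  · exact not_lt.1 fun hlt => apply_firstDiff_ne hne' ((h _).1 (apply_eq_of_lt_firstDiff hlt))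
  · exact not_lt.1 fun hlt => apply_firstDiff_ne hne ((h _).2 (apply_eq_of_lt_firstDiff hlt))

variable {G : Type*} [Group G] (K : ℕ → Subgroup G)

def cosetSeq (g : G) : ∀ n, G ⧸ K n := fun n => (g : G ⧸ K n)

/-- `filtrationDist K g h = 2⁻ⁿ` for the least `n` with `g⁻¹ * h ∉ K n`. -/
noncomputable def filtrationDist (g h : G) : ℝ := dist (cosetSeq K g) (cosetSeq K h)

variable {K}

theorem cosetSeq_apply_eq_iff {g h : G} {n : ℕ} :
    cosetSeq K g n = cosetSeq K h n ↔ g⁻¹ * h ∈ K n :=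
  QuotientGroup.eq

theorem filtrationDist_eq_zero_iff (hK : ⨅ n, K n = ⊥) {g h : G} :
    filtrationDist K g h = 0 ↔ g = h := by
  refine ⟨fun h0 => ?_, fun hgh => hgh ▸ PiNat.dist_self _⟩
  have hmem : g⁻¹ * h ∈ ⨅ n, K n := Subgroup.mem_iInf.2 fun n =>
    cosetSeq_apply_eq_iff.1 (congrFun (PiNat.eq_of_dist_eq_zero _ _ h0) n)
  rw [hK, Subgroup.mem_bot, inv_mul_eq_one] at hmem
  exact hmem

theorem filtrationDist_comm (g h : G) : filtrationDist K g h = filtrationDist K h g :=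
  PiNat.dist_comm _ _

theorem filtrationDist_le_max (g h k : G) :
    filtrationDist K g k ≤ max (filtrationDist K g h) (filtrationDist K h k) :=
  dist_triangle_nonarch _ _ _

theorem filtrationDist_mul_left (g h₁ h₂ : G) :
    filtrationDist K (g * h₁) (g * h₂) = filtrationDist K h₁ h₂ :=
  PiNat.dist_congr fun n => by
    rw [cosetSeq_apply_eq_iff, cosetSeq_apply_eq_iff, mul_inv_rev, mul_assoc, inv_mul_cancel_left]

theorem filtrationDist_le_of_mem (hK : Antitone K) {g h : G} {n : ℕ} (hn : g⁻¹ * h ∈ K n) :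
    filtrationDist K g h ≤ (1 / 2) ^ (n + 1) := by
  rw [filtrationDist, PiNat.dist_comm, ← mem_cylinder_iff_dist_le]
  exact fun i hi => (cosetSeq_apply_eq_iff.2 (hK (Nat.le_of_lt_succ hi) hn)).symm

theorem filtrationDist_eq_of_mem_of_notMem (hK : Antitone K) {g h : G} {m : ℕ}
    (hm : g⁻¹ * h ∈ K m) (hm' : g⁻¹ * h ∉ K (m + 1)) :
    filtrationDist K g h = (1 / 2) ^ (m + 1) := by
  have hne : cosetSeq K g ≠ cosetSeq K h := fun heq =>
    hm' (cosetSeq_apply_eq_iff.1 (congrFun heq (m + 1)))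
  rw [filtrationDist, dist_eq_of_ne hne]
  congr 1
  apply le_antisymm
  · exact not_lt.1 fun hlt => hm' (cosetSeq_apply_eq_iff.1 (apply_eq_of_lt_firstDiff hlt))
  · by_contra! hlt
    exact apply_firstDiff_ne hne (cosetSeq_apply_eq_iff.2 (hK (Nat.le_of_lt_succ hlt) hm))

theorem exists_countable_filtrationDist_lt (hK : Antitone K) [∀ n, Countable (G ⧸ K n)] :
    ∃ D : Set G, D.Countable ∧ ∀ g : G, ∀ ε : ℝ, 0 < ε → ∃ x ∈ D, filtrationDist K g x < ε := by
  refine ⟨⋃ n, Set.range (Quotient.out : G ⧸ K n → G),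
    Set.countable_iUnion fun n => Set.countable_range _, fun g ε hε => ?_⟩
  obtain ⟨n, hn⟩ := exists_pow_lt_of_lt_one hε one_half_lt_one
  refine ⟨(g : G ⧸ K n).out, Set.mem_iUnion.2 ⟨n, Set.mem_range_self _⟩, ?_⟩
  have hmem : g⁻¹ * (g : G ⧸ K n).out ∈ K n :=
    cosetSeq_apply_eq_iff.1 (QuotientGroup.out_eq' (g : G ⧸ K n)).symm
  calc filtrationDist K g _ ≤ (1 / 2) ^ (n + 1) := filtrationDist_le_of_mem hK hmem
    _ ≤ (1 / 2) ^ n := pow_le_pow_of_le_one (by norm_num) (by norm_num) n.le_succ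
    _ < ε := hn

end Filtration

theorem Subgroup.exists_finset_mem_closure_image {G V : Type*} [Group G] {f : V → G} {g : G}
    (hg : g ∈ Subgroup.closure (Set.range f)) :
    ∃ T : Finset V, g ∈ Subgroup.closure (f '' T) := by
  classical
  induction hg using Subgroup.closure_induction with
  | mem _ hx =>
    obtain ⟨v, rfl⟩ := hx
    exact ⟨{v}, Subgroup.subset_closure (by simp)⟩
  | one => exact ⟨∅, one_mem _⟩
  | mul _ _ _ _ hx hy =>
    obtain ⟨T₁, h₁⟩ := hx
    obtain ⟨T₂, h₂⟩ := hy
    refine ⟨T₁ ∪ T₂, mul_mem ?_ ?_⟩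
    · exact Subgroup.closure_mono (Set.image_mono (by simp)) h₁
    · exact Subgroup.closure_mono (Set.image_mono (by simp)) h₂
  | inv _ _ hx =>
    obtain ⟨T, hT⟩ := hx
    exact ⟨T, inv_mem hT⟩

section CylinderSubgroup

variable {G : Type*} [Group G] (f : (ℕ → ℕ) → G)

def cylinderSubgroup (n : ℕ) : Subgroup G :=
  Subgroup.normalClosure {g | ∃ η, ∃ ν ∈ cylinder η n, g = (f η)⁻¹ * f ν}

instance (n : ℕ) : (cylinderSubgroup f n).Normal := Subgroup.normalClosure_normal

theorem cylinderSubgroup_antitone : Antitone (cylinderSubgroup f) := fun _ _ hmn =>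
  Subgroup.normalClosure_mono <| by
    rintro _ ⟨η, ν, hν, rfl⟩
    exact ⟨η, ν, cylinder_anti η hmn hν, rfl⟩

theorem inv_mul_mem_cylinderSubgroup {n : ℕ} {η ν : ℕ → ℕ} (h : ν ∈ cylinder η n) :
    (f η)⁻¹ * f ν ∈ cylinderSubgroup f n :=
  Subgroup.subset_normalClosure ⟨η, ν, h, rfl⟩

theorem cylinderSubgroup_le_ker {H : Type*} [Group H] {φ : G →* H} {n : ℕ}
    (h : ∀ η, ∀ ν ∈ cylinder η n, φ (f η) = φ (f ν)) : cylinderSubgroup f n ≤ φ.ker :=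
  Subgroup.normalClosure_le_normal <| by
    rintro _ ⟨η, ν, hν, rfl⟩
    rw [SetLike.mem_coe, MonoidHom.mem_ker, map_mul, map_inv, h η ν hν, inv_mul_cancel]

theorem countable_quotient_cylinderSubgroup (hf : Subgroup.closure (Set.range f) = ⊤) (n : ℕ) :
    Countable (G ⧸ cylinderSubgroup f n) := by
  let extend : (Fin n → ℕ) → ℕ → ℕ := fun s i => if h : i < n then s ⟨i, h⟩ else 0
  have hextend (η : ℕ → ℕ) :
      (f η : G ⧸ cylinderSubgroup f n) = f (extend fun i => η i) :=
    QuotientGroup.eq.2 (inv_mul_mem_cylinderSubgroup f fun i hi => by simp [extend, hi])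
  refine (FreeGroup.lift_surjective_iff_closure_range_eq_top.2 (top_le_iff.1 ?_)).countable
    (f := FreeGroup.lift fun s => (f (extend s) : G ⧸ cylinderSubgroup f n))
  calc ⊤ = (⊤ : Subgroup G).map (QuotientGroup.mk' _) :=
        (Subgroup.map_top_of_surjective _ (QuotientGroup.mk'_surjective _)).symm
    _ = Subgroup.closure (QuotientGroup.mk' _ '' Set.range f) := by
        rw [← hf, MonoidHom.map_closure]
    _ ≤ _ := Subgroup.closure_mono <| by
        rintro _ ⟨_, ⟨η, rfl⟩, rfl⟩
        exact ⟨fun i => η i, (hextend η).symm⟩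

end CylinderSubgroup

namespace GraphProd

section Lift

variable {V : Type*} {E : V → V → Prop} {p : V → ℕ}

theorem gen_pow_self (v : V) : gen E p v ^ p v = 1 := by
  rw [gen, PresentedGroup.of, ← map_pow]
  exact PresentedGroup.one_of_mem (Or.inl ⟨v, rfl⟩)

theorem commute_gen {a b : V} (h : E a b) : Commute (gen E p a) (gen E p b) := by
  rw [← commutatorElement_eq_one_iff_commute, commutatorElement_def]
  simpa only [gen, PresentedGroup.of, map_mul, map_inv] using
    PresentedGroup.one_of_mem (rels := graphProdRels E p) (Or.inr ⟨a, b, h, rfl⟩)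

theorem closure_range_gen : Subgroup.closure (Set.range (gen E p)) = ⊤ :=
  PresentedGroup.closure_range_of _

def lift {H : Type*} [Group H] (f : V → H) (hpow : ∀ v, f v ^ p v = 1)
    (hcomm : ∀ a b, E a b → Commute (f a) (f b)) : GraphProd E p →* H :=
  PresentedGroup.toGroup (f := f) <| by
    rintro r (⟨a, rfl⟩ | ⟨a, b, hab, rfl⟩)
    · rw [map_pow, FreeGroup.lift_apply_of, hpow]
    · simp only [map_mul, map_inv, FreeGroup.lift_apply_of]
      exact commutatorElement_eq_one_iff_commute.2 (hcomm a b hab)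

@[simp]
theorem lift_gen {H : Type*} [Group H] (f : V → H) (hpow : ∀ v, f v ^ p v = 1)
    (hcomm : ∀ a b, E a b → Commute (f a) (f b)) (v : V) :
    lift f hpow hcomm (gen E p v) = f v :=
  PresentedGroup.toGroup.of _

noncomputable def letterCount (C : Set V) (q : ℕ) (hq : ∀ v ∈ C, q ∣ p v) :
    GraphProd E p →* Multiplicative (ZMod q) :=
  lift (fun v => Multiplicative.ofAdd (C.indicator 1 v))
    (fun v => by
      by_cases hv : v ∈ C
      · rw [← ofAdd_nsmul, Set.indicator_of_mem hv, Pi.one_apply, nsmul_one,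
          (ZMod.natCast_eq_zero_iff _ _).2 (hq v hv), ofAdd_zero]
      · rw [Set.indicator_of_notMem hv, ofAdd_zero, one_pow])
    (fun _ _ _ => Commute.all _ _)

theorem letterCount_gen (C : Set V) (q : ℕ) (hq : ∀ v ∈ C, q ∣ p v) (v : V) :
    letterCount C q hq (gen E p v) = Multiplicative.ofAdd (C.indicator 1 v) :=
  lift_gen _ _ _ v

end Lift

variable {E : (ℕ → ℕ) → (ℕ → ℕ) → Prop} {p : (ℕ → ℕ) → ℕ}

theorem inv_mul_gen_notMem_cylinderSubgroup (hdep : ∀ η ν : ℕ → ℕ, η 0 = ν 0 → p η = p ν)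
    {η ν : ℕ → ℕ} (hp : p η ≠ 1) {m : ℕ} (hne : η m ≠ ν m) :
    (gen E p η)⁻¹ * gen E p ν ∉ cylinderSubgroup (gen E p) (m + 1) := by
  set C := cylinder η (m + 1)
  have hC : ∀ v ∈ C, p η ∣ p v := fun v hv => (hdep η v (hv 0 m.succ_pos).symm).dvd
  have hker : cylinderSubgroup (gen E p) (m + 1) ≤ (letterCount (E := E) C (p η) hC).ker := by
    refine cylinderSubgroup_le_ker _ fun α β hβ => ?_
    simp only [letterCount_gen, C, Set.indicator, Pi.one_apply, mem_cylinder_iff_eq,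
      mem_cylinder_iff_eq.1 hβ]
  have hν : ν ∉ C := fun hν => hne (hν m m.lt_succ_self).symm
  have : Nontrivial (ZMod (p η)) := ZMod.nontrivial_iff.2 hp
  intro hmem
  have h1 := hker hmem
  rw [MonoidHom.mem_ker, map_mul, map_inv, letterCount_gen, letterCount_gen,
    Set.indicator_of_mem (self_mem_cylinder η _), Set.indicator_of_notMem hν, ofAdd_zero,
    mul_one, inv_eq_one, ofAdd_eq_one, Pi.one_apply] at h1
  exact one_ne_zero h1

theorem exists_retraction (hdep : ∀ η ν : ℕ → ℕ, η 0 = ν 0 → p η = p ν)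
    (T : Finset (ℕ → ℕ)) {N : ℕ} (hN : 0 < N)
    (hsep : ∀ s ∈ T, ∀ t ∈ T, t ∈ cylinder s N → t = s)
    (hadj : ∀ s ∈ T, ∀ t ∈ T, ∀ α ∈ cylinder s N, ∀ β ∈ cylinder t N, E α β → E s t) :
    ∃ ψ : GraphProd E p →* GraphProd E p,
      (∀ t ∈ T, ψ (gen E p t) = gen E p t) ∧ cylinderSubgroup (gen E p) N ≤ ψ.ker := by
  classical
  let F : (ℕ → ℕ) → GraphProd E p := fun η =>
    if h : ∃ t ∈ T, η ∈ cylinder t N then gen E p h.choose else 1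
  have hF (η : ℕ → ℕ) : F η = 1 ∨ ∃ t ∈ T, η ∈ cylinder t N ∧ F η = gen E p t := by
    by_cases h : ∃ t ∈ T, η ∈ cylinder t N
    · exact Or.inr ⟨h.choose, h.choose_spec.1, h.choose_spec.2, dif_pos h⟩
    · exact Or.inl (dif_neg h)
  have hF_cylinder (η : ℕ → ℕ) : ∀ ν ∈ cylinder η N, F η = F ν := fun ν hν => by
    simp only [F, mem_cylinder_iff_eq, mem_cylinder_iff_eq.1 hν]
  have hF_T (t : ℕ → ℕ) (ht : t ∈ T) : F t = gen E p t := by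
    have h : ∃ s ∈ T, t ∈ cylinder s N := ⟨t, ht, self_mem_cylinder t N⟩
    simp only [F, dif_pos h]
    exact congrArg (gen E p) (hsep _ h.choose_spec.1 t ht h.choose_spec.2).symm
  have hpow (v : ℕ → ℕ) : F v ^ p v = 1 := by
    obtain h | ⟨t, -, hv, h⟩ := hF v
    · rw [h, one_pow]
    · rw [h, hdep v t (hv 0 hN), gen_pow_self]
  have hcomm (a b : ℕ → ℕ) (hab : E a b) : Commute (F a) (F b) := by
    obtain ha | ⟨t, ht, hat, ha⟩ := hF a
    · exact ha ▸ Commute.one_left _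
    obtain hb | ⟨u, hu, hbu, hb⟩ := hF b
    · exact hb ▸ Commute.one_right _
    exact ha ▸ hb ▸ commute_gen (hadj t ht u hu a hat b hbu hab)
  refine ⟨lift F hpow hcomm, fun t ht => by rw [lift_gen, hF_T t ht], ?_⟩
  exact cylinderSubgroup_le_ker _ fun η ν hν => by rw [lift_gen, lift_gen, hF_cylinder η ν hν]

theorem iInf_cylinderSubgroup_eq_bot (hE : IsClosed {q : (ℕ → ℕ) × (ℕ → ℕ) | E q.1 q.2})
    (hdep : ∀ η ν : ℕ → ℕ, η 0 = ν 0 → p η = p ν) :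
    ⨅ n, cylinderSubgroup (gen E p) n = ⊥ := by
  refine (Subgroup.eq_bot_iff_forall _).2 fun g hg => ?_
  obtain ⟨T, hT⟩ := Subgroup.exists_finset_mem_closure_image
    (closure_range_gen (E := E) (p := p) ▸ Subgroup.mem_top g)
  obtain ⟨N, hN, hsep, hadj⟩ := exists_cylinder_depth_separating hE T
  obtain ⟨ψ, hψT, hψK⟩ := exists_retraction hdep T hN hsep hadj
  have hψg : ψ g = g := (Subgroup.closure_le (ψ.eqLocus (MonoidHom.id _))).2
    (by rintro _ ⟨t, ht, rfl⟩; exact hψT t ht) hT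
  rw [← hψg]
  exact hψK (Subgroup.mem_iInf.1 hg N)

end GraphProd

theorem graphProd_baire_admits_leftInvariant_separable_ultrametric_general
    (E : (ℕ → ℕ) → (ℕ → ℕ) → Prop)
    (hEclosed : IsClosed {q : (ℕ → ℕ) × (ℕ → ℕ) | E q.1 q.2})
    (p : (ℕ → ℕ) → ℕ) (hp : ∀ η, p η ≠ 0 → IsPrimePow (p η))
    (hdep : ∀ η ν : ℕ → ℕ, η 0 = ν 0 → p η = p ν) :
    ∃ d : GraphProd E p → GraphProd E p → ℝ,
      -- `d` is a metric …
      (∀ g h, d g h = 0 ↔ g = h) ∧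
      (∀ g h, d g h = d h g) ∧
      -- … which is an ultrametric …
      (∀ g h k, d g k ≤ max (d g h) (d h k)) ∧
      -- … left-invariant …
      (∀ g h₁ h₂, d (g * h₁) (g * h₂) = d h₁ h₂) ∧
      -- … separable …
      (∃ D : Set (GraphProd E p), D.Countable ∧
        ∀ g : GraphProd E p, ∀ ε : ℝ, 0 < ε → ∃ x ∈ D, d g x < ε) ∧
      -- … and extends the standard metric of the Baire space.
      (∀ η ν : ℕ → ℕ, ∀ m : ℕ, (∀ i < m, η i = ν i) → η m ≠ ν m →
        d (GraphProd.gen E p η) (GraphProd.gen E p ν) = (2 : ℝ) ^ (-(m + 1 : ℤ))) := by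
  let K := cylinderSubgroup (GraphProd.gen E p)
  have hK : Antitone K := cylinderSubgroup_antitone _
  have := countable_quotient_cylinderSubgroup _ (GraphProd.closure_range_gen (E := E) (p := p))
  refine ⟨filtrationDist K,
    fun _ _ => filtrationDist_eq_zero_iff (GraphProd.iInf_cylinderSubgroup_eq_bot hEclosed hdep),
    filtrationDist_comm, filtrationDist_le_max, filtrationDist_mul_left,
    exists_countable_filtrationDist_lt hK, fun η ν m hpre hne => ?_⟩
  have hp_one : p η ≠ 1 := fun h => not_isPrimePow_one (h ▸ hp η (by omega))
  rw [filtrationDist_eq_of_mem_of_notMem hK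
    (inv_mul_mem_cylinderSubgroup _ fun i hi => (hpre i hi).symm)
    (GraphProd.inv_mul_gen_notMem_cylinderSubgroup hdep hp_one hne), zpow_neg, one_div, inv_pow]
  norm_cast

/-- **Theorem 1.** Let `Γ = (ω^ω, E)` be a graph on the Baire space whose edge
relation is closed, and let `𝔭` be a coloring by prime powers or `∞` (encoded
as `0`) such that `𝔭(η)` depends only on `η(0)`.  Then `G = G(Γ, 𝔭)` admits a
left-invariant separable group ultrametric extending the standard metric of
the Baire space (in which distinct `η, ν` are at distance `2^{-(m+1)}`, `m`
being the length of their longest common initial segment). -/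
theorem graphProd_baire_admits_leftInvariant_separable_ultrametric
    (E : (ℕ → ℕ) → (ℕ → ℕ) → Prop) (hEsym : Symmetric E)
    (hEclosed : IsClosed {q : (ℕ → ℕ) × (ℕ → ℕ) | E q.1 q.2})
    (p : (ℕ → ℕ) → ℕ) (hp : ∀ η, p η ≠ 0 → IsPrimePow (p η))
    (hdep : ∀ η ν : ℕ → ℕ, η 0 = ν 0 → p η = p ν) :
    ∃ d : GraphProd E p → GraphProd E p → ℝ,
      -- `d` is a metric …
      (∀ g h, d g h = 0 ↔ g = h) ∧
      (∀ g h, d g h = d h g) ∧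
      -- … which is an ultrametric …
      (∀ g h k, d g k ≤ max (d g h) (d h k)) ∧
      -- … left-invariant …
      (∀ g h₁ h₂, d (g * h₁) (g * h₂) = d h₁ h₂) ∧
      -- … separable …
      (∃ D : Set (GraphProd E p), D.Countable ∧
        ∀ g : GraphProd E p, ∀ ε : ℝ, 0 < ε → ∃ x ∈ D, d g x < ε) ∧
      -- … and extends the standard metric of the Baire space.
      (∀ η ν : ℕ → ℕ, ∀ m : ℕ, (∀ i < m, η i = ν i) → η m ≠ ν m →
        d (GraphProd.gen E p η) (GraphProd.gen E p ν) = (2 : ℝ) ^ (-(m + 1 : ℤ))) :=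
  graphProd_baire_admits_leftInvariant_separable_ultrametric_general E hEclosed p hp hdep
end

section
/- Let Γ = (V, E_Γ) be a graph and 𝔭 : V → {pⁿ : p prime, n ≥ 1} ∪ {∞} a coloring. If there is a metric on the vertex set V which induces a separable topology in which E_Γ is a closed subset of V × V, then the graph product G(Γ, 𝔭) embeds (via an injective group homomorphism) into a non-Archimedean Polish group. -/
/-- `m` is a metric on `V` inducing a separable topology in which `E` is a
closed subset of `V × V`. -/
def SepClosedMetric {V : Type*} (m : MetricSpace V) (E : Set (V × V)) : Prop :=
  @TopologicalSpace.SeparableSpace V m.toUniformSpace.toTopologicalSpace ∧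
  @IsClosed (V × V)
    (@instTopologicalSpaceProd V V m.toUniformSpace.toTopologicalSpace
      m.toUniformSpace.toTopologicalSpace) E

/-- `G` embeds, via an injective group homomorphism, into a Polish group. -/
def EmbedsInPolishGroup (G : Type*) [Group G] : Prop :=
  ∃ (H : Type) (gH : Group H) (tH : TopologicalSpace H),
    @IsTopologicalGroup H tH gH ∧ @PolishSpace H tH ∧
    ∃ f : G →* H, Function.Injective f

/-- `G` embeds, via an injective group homomorphism, into a non-Archimedean
Polish group. -/
def EmbedsInNonArchPolishGroup (G : Type*) [Group G] : Prop :=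
  ∃ (H : Type) (gH : Group H) (tH : TopologicalSpace H),
    @IsTopologicalGroup H tH gH ∧ @PolishSpace H tH ∧ @NonarchimedeanGroup H gH tH ∧
    ∃ f : G →* H, Function.Injective f

/-!
A countable product of countable discrete groups is a non-Archimedean Polish group, so it suffices
to separate the elements of `G(Γ, 𝔭)` by countably many homomorphisms into countable groups.
A nontrivial `g` involves finitely many vertices `s i`. As `V` is second countable and T1 and
`E_Γ` is closed, these have basic open neighbourhoods `U i` such that collapsing each `U i` onto
`s i` maps edges to edges or loops. Sending the vertices of `U i` to one generator `i` gives a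
homomorphism onto a countable group that depends only on the countable data `(U i, 𝔭(s i))`, and
sending `i` back to `s i` retracts it on the subgroup generated by the `s i`, which contains `g`.
-/

open Topology TopologicalSpace

theorem Subgroup.exists_finite_of_mem_closure_range {G α : Type*} [Group G] {f : α → G} {g : G}
    (hg : g ∈ Subgroup.closure (Set.range f)) :
    ∃ t : Set α, t.Finite ∧ g ∈ Subgroup.closure (f '' t) := by
  induction hg using Subgroup.closure_induction with
  | mem x hx =>
    obtain ⟨a, rfl⟩ := hx
    exact ⟨{a}, Set.finite_singleton a, subset_closure (Set.mem_image_of_mem f rfl)⟩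
  | one => exact ⟨∅, Set.finite_empty, one_mem _⟩
  | mul x y _ _ hx hy =>
    obtain ⟨t, htfin, hxt⟩ := hx
    obtain ⟨u, hufin, hyu⟩ := hy
    exact ⟨t ∪ u, htfin.union hufin,
      mul_mem (closure_mono (Set.image_mono Set.subset_union_left) hxt)
        (closure_mono (Set.image_mono Set.subset_union_right) hyu)⟩
  | inv x _ hx =>
    obtain ⟨t, htfin, hxt⟩ := hx
    exact ⟨t, htfin, inv_mem hxt⟩

instance Pi.nonarchimedeanGroup {ι : Type*} {G : ι → Type*} [∀ i, Group (G i)]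
    [∀ i, TopologicalSpace (G i)] [∀ i, NonarchimedeanGroup (G i)] :
    NonarchimedeanGroup (∀ i, G i) where
  is_nonarchimedean U hU := by
    rw [nhds_pi, Filter.mem_pi] at hU
    obtain ⟨I, hI, t, ht, hIt⟩ := hU
    choose W hW using fun i => NonarchimedeanGroup.is_nonarchimedean (t i) (ht i)
    refine ⟨⟨Subgroup.pi I fun i => (W i : Subgroup (G i)), ?_⟩, ?_⟩
    · exact isOpen_set_pi hI fun i _ => (W i).isOpen
    · exact (Set.pi_mono fun i _ => hW i).trans hIt

instance DiscreteTopology.nonarchimedeanGroup {G : Type*} [Group G] [TopologicalSpace G]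
    [DiscreteTopology G] : NonarchimedeanGroup G where
  is_nonarchimedean U hU :=
    ⟨⟨⊥, isOpen_discrete _⟩, fun g hg => by
      rw [Subgroup.mem_bot.1 hg]
      exact mem_of_mem_nhds hU⟩

instance PresentedGroup.instCountable {α : Type*} [Countable α] (rels : Set (FreeGroup α)) :
    Countable (PresentedGroup rels) :=
  (PresentedGroup.mk_surjective rels).countable

/-- The ambient group is the countable product of the discrete groups `C i`. -/
theorem embedsInNonArchPolishGroup_of_forall_eq_one {G : Type*} [Group G] {ι : Type}
    [Countable ι] {C : ι → Type} [∀ i, Group (C i)] [∀ i, Countable (C i)]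
    (φ : ∀ i, G →* C i) (hφ : ∀ g, (∀ i, φ i g = 1) → g = 1) :
    EmbedsInNonArchPolishGroup G := by
  let _ : ∀ i, TopologicalSpace (C i) := fun _ => ⊥
  have _ : ∀ i, DiscreteTopology (C i) := fun _ => ⟨rfl⟩
  exact ⟨∀ i, C i, inferInstance, inferInstance, inferInstance, inferInstance, inferInstance,
    MonoidHom.pi φ, (injective_iff_map_eq_one _).2 fun g hg => hφ g (congrFun hg)⟩

namespace GraphProd

variable {V : Type*} {E : V → V → Prop} {p : V → ℕ}

theorem of_pow_eq_one (v : V) : (PresentedGroup.of v : GraphProd E p) ^ p v = 1 := by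
  rw [PresentedGroup.of, ← map_pow]
  exact PresentedGroup.one_of_mem (Or.inl ⟨v, rfl⟩)

theorem commute_of {a b : V} (h : E a b) :
    Commute (PresentedGroup.of a : GraphProd E p) (PresentedGroup.of b) := by
  have hrel : (PresentedGroup.of a * PresentedGroup.of b * (PresentedGroup.of a)⁻¹ *
      (PresentedGroup.of b)⁻¹ : GraphProd E p) = 1 :=
    PresentedGroup.one_of_mem (Or.inr ⟨a, b, h, rfl⟩)
  rw [Commute, SemiconjBy, ← mul_inv_eq_one, mul_inv_rev, ← mul_assoc]
  exact hrel

theorem lift_eq_one_of_mem_graphProdRels {H : Type*} [Group H] {f : V → H}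
    (hpow : ∀ v, f v ^ p v = 1) (hcomm : ∀ a b, E a b → Commute (f a) (f b))
    {r : FreeGroup V} (hr : r ∈ graphProdRels E p) : FreeGroup.lift f r = 1 := by
  rcases hr with ⟨v, rfl⟩ | ⟨a, b, hab, rfl⟩
  · simp [hpow]
  · simp [(hcomm a b hab).eq]

variable {α : Type*}

/-- Collapsing each `U i` onto `s i` fixes every `s i` and sends adjacent vertices to equal or
adjacent vertices. -/
structure IsCollapsing (E : V → V → Prop) (s : α → V) (U : α → Set V) : Prop where
  mem : ∀ i, s i ∈ U i
  eq_of_mem : ∀ i j, s i ∈ U j → j = i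
  adj : ∀ i j a b, a ∈ U i → b ∈ U j → E a b → i = j ∨ E (s i) (s j)

theorem IsCollapsing.mono {s : α → V} {U U' : α → Set V} (hU : IsCollapsing E s U)
    (hU' : ∀ i, U' i ⊆ U i) (hmem : ∀ i, s i ∈ U' i) : IsCollapsing E s U' where
  mem := hmem
  eq_of_mem i j hi := hU.eq_of_mem i j (hU' j hi)
  adj i j a b ha hb := hU.adj i j a b (hU' i ha) (hU' j hb)

open Classical in
/-- A vertex `v ∈ U i` goes to the generator `i` only when `c i ∣ p v`, so that the relation
`v ^ p v = 1` is compatible with `i` having order `c i`. -/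
noncomputable def collapse (p : V → ℕ) (U : α → Set V) (c : α → ℕ) (v : V) : FreeGroup α :=
  if h : ∃ i, v ∈ U i ∧ c i ∣ p v then FreeGroup.of h.choose else 1

theorem collapse_eq_one_or (p : V → ℕ) (U : α → Set V) (c : α → ℕ) (v : V) :
    collapse p U c v = 1 ∨ ∃ i, v ∈ U i ∧ c i ∣ p v ∧ collapse p U c v = FreeGroup.of i := by
  by_cases h : ∃ i, v ∈ U i ∧ c i ∣ p v
  · exact Or.inr ⟨h.choose, h.choose_spec.1, h.choose_spec.2, dif_pos h⟩
  · exact Or.inl (dif_neg h)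

theorem IsCollapsing.collapse_apply {s : α → V} {U : α → Set V} (hU : IsCollapsing E s U)
    (i : α) : collapse p U (p ∘ s) (s i) = FreeGroup.of i := by
  have h : ∃ j, s i ∈ U j ∧ (p ∘ s) j ∣ p (s i) := ⟨i, hU.mem i, dvd_rfl⟩
  rw [collapse, dif_pos h, hU.eq_of_mem i _ h.choose_spec.1]

def collapsedRels (E : V → V → Prop) (p : V → ℕ) (U : α → Set V) (c : α → ℕ) :
    Set (FreeGroup α) :=
  FreeGroup.lift (collapse p U c) '' graphProdRels E p

noncomputable def toCollapsed (E : V → V → Prop) (p : V → ℕ) (U : α → Set V) (c : α → ℕ) :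
    GraphProd E p →* PresentedGroup (collapsedRels E p U c) :=
  PresentedGroup.map _ (Set.mapsTo_image _ _)

theorem toCollapsed_of (U : α → Set V) (c : α → ℕ) (v : V) :
    toCollapsed E p U c (PresentedGroup.of v) = PresentedGroup.mk _ (collapse p U c v) :=
  congrArg (PresentedGroup.mk _) (FreeGroup.lift_apply_of (f := collapse p U c))

theorem eq_one_of_toCollapsed_eq_one {s : α → V} {U : α → Set V} (hU : IsCollapsing E s U)
    {g : GraphProd E p} (hg : g ∈ Subgroup.closure (Set.range fun i => PresentedGroup.of (s i)))
    (hcol : toCollapsed E p U (p ∘ s) g = 1) : g = 1 := by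
  let f : V → GraphProd E p := fun v =>
    FreeGroup.lift (fun i => PresentedGroup.of (s i)) (collapse p U (p ∘ s) v)
  have hf : ∀ v, f v = 1 ∨ ∃ i, v ∈ U i ∧ p (s i) ∣ p v ∧ f v = PresentedGroup.of (s i) := by
    intro v
    rcases collapse_eq_one_or p U (p ∘ s) v with h | ⟨i, hi, hdvd, h⟩
    · exact Or.inl (by simp only [f, h, map_one])
    · exact Or.inr ⟨i, hi, hdvd, by simp only [f, h, FreeGroup.lift_apply_of]⟩
  have hpow : ∀ v, f v ^ p v = 1 := by
    intro v
    rcases hf v with h | ⟨i, -, ⟨t, ht⟩, h⟩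
    · rw [h, one_pow]
    · rw [h, ht, pow_mul, of_pow_eq_one, one_pow]
  have hcomm : ∀ a b, E a b → Commute (f a) (f b) := by
    intro a b hab
    rcases hf a with ha | ⟨i, hai, -, ha⟩
    · exact ha ▸ Commute.one_left _
    rcases hf b with hb | ⟨j, hbj, -, hb⟩
    · exact hb ▸ Commute.one_right _
    rw [ha, hb]
    rcases hU.adj i j a b hai hbj hab with rfl | hij
    · exact Commute.refl _
    · exact commute_of hij
  have hlift : ∀ r, FreeGroup.lift (fun i => PresentedGroup.of (s i))
      (FreeGroup.lift (collapse p U (p ∘ s)) r) = FreeGroup.lift f r := fun r =>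
    DFunLike.congr_fun (FreeGroup.ext_hom ((FreeGroup.lift fun i => PresentedGroup.of (s i)).comp
      (FreeGroup.lift (collapse p U (p ∘ s)))) (FreeGroup.lift f) fun v => by
        simp only [MonoidHom.comp_apply, FreeGroup.lift_apply_of, f]) r
  -- `θ ∘ toCollapsed` is the endomorphism `v ↦ f v` of `G(Γ, 𝔭)`, which fixes every `s i`
  let θ : PresentedGroup (collapsedRels E p U (p ∘ s)) →* GraphProd E p :=
    PresentedGroup.toGroup (f := fun i => PresentedGroup.of (s i)) <| by
      rintro _ ⟨r, hr, rfl⟩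
      rw [hlift]
      exact lift_eq_one_of_mem_graphProdRels hpow hcomm hr
  have hθ : Set.EqOn (θ.comp (toCollapsed E p U (p ∘ s))) (MonoidHom.id (GraphProd E p))
      (Set.range fun i => PresentedGroup.of (s i)) := by
    rintro _ ⟨i, rfl⟩
    rw [MonoidHom.comp_apply, toCollapsed_of, hU.collapse_apply]
    exact PresentedGroup.toGroup.of _
  have := MonoidHom.eqOn_closure hθ hg
  rw [MonoidHom.comp_apply, hcol, map_one] at this
  exact this.symm

variable [TopologicalSpace V] [T1Space V]

theorem exists_isCollapsing_nhds [Finite α] (hE : IsClosed {q : V × V | E q.1 q.2})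
    {s : α → V} (hs : Function.Injective s) :
    ∃ U : α → Set V, (∀ i, U i ∈ 𝓝 (s i)) ∧ IsCollapsing E s U := by
  have hpair : ∀ i j, ∃ A ∈ 𝓝 (s i), ∃ B ∈ 𝓝 (s j), ∀ a ∈ A, ∀ b ∈ B,
      i ≠ j → a ≠ s j ∧ (E a b → E (s i) (s j)) := by
    intro i j
    by_cases hij : i = j
    · exact ⟨Set.univ, Filter.univ_mem, Set.univ, Filter.univ_mem, fun _ _ _ _ h => absurd hij h⟩
    have hne : ∀ᶠ q : V × V in 𝓝 (s i, s j), q.1 ≠ s j :=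
      continuous_fst.continuousAt.eventually (eventually_ne_nhds (hs.ne hij))
    have hadj : ∀ᶠ q : V × V in 𝓝 (s i, s j), E q.1 q.2 → E (s i) (s j) := by
      by_cases h : E (s i) (s j)
      · exact Filter.Eventually.of_forall fun _ _ => h
      · exact Filter.Eventually.mono (hE.isOpen_compl.mem_nhds (x := (s i, s j)) h)
          fun q hq hq' => absurd hq' hq
    rw [nhds_prod_eq] at hne hadj
    obtain ⟨A, hA, B, hB, hAB⟩ := Filter.mem_prod_iff.1 (hne.and hadj)
    exact ⟨A, hA, B, hB, fun a ha b hb _ => hAB (Set.mk_mem_prod ha hb)⟩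
  choose A hA B hB hAB using hpair
  refine ⟨fun i => ⋂ j, A i j ∩ B j i,
    fun i => Filter.iInter_mem.2 fun j => Filter.inter_mem (hA i j) (hB j i), ?_⟩
  refine ⟨fun i => mem_of_mem_nhds (Filter.iInter_mem.2 fun j =>
    Filter.inter_mem (hA i j) (hB j i)), fun i j hi => ?_, fun i j a b ha hb hab => ?_⟩
  · by_contra hji
    exact (hAB j i (s i) (Set.mem_iInter.1 hi i).1 (s i) (mem_of_mem_nhds (hB j i)) hji).1 rfl
  · by_cases hij : i = j
    · exact Or.inl hij
    · exact Or.inr ((hAB i j a (Set.mem_iInter.1 ha j).1 b (Set.mem_iInter.1 hb i).2 hij).2 hab)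

theorem exists_toCollapsed_ne_one (hE : IsClosed {q : V × V | E q.1 q.2})
    {b : Set (Set V)} (hb : IsTopologicalBasis b) {g : GraphProd E p} (hg : g ≠ 1) :
    ∃ (k : ℕ) (U : Fin k → b) (c : Fin k → ℕ),
      toCollapsed E p (fun i => (U i : Set V)) c g ≠ 1 := by
  have hgen : g ∈ Subgroup.closure (Set.range PresentedGroup.of) := by
    rw [PresentedGroup.closure_range_of]
    trivial
  obtain ⟨T, hTfin, hgT⟩ := Subgroup.exists_finite_of_mem_closure_range hgen
  obtain ⟨k, s, rfl⟩ := hTfin.fin_embedding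
  rw [← Set.range_comp] at hgT
  obtain ⟨U, hUnhds, hU⟩ := exists_isCollapsing_nhds hE s.injective
  choose W hWb hsW hWU using fun i => hb.mem_nhds_iff.1 (hUnhds i)
  exact ⟨k, fun i => ⟨W i, hWb i⟩, p ∘ s, fun h1 =>
    hg (eq_one_of_toCollapsed_eq_one (hU.mono hWU hsW) hgT h1)⟩

end GraphProd

theorem graphProd_embedsInNonArchPolishGroup_of_sepClosedMetric_general
    {V : Type} (E : V → V → Prop)
    (p : V → ℕ)
    (h : ∃ m : MetricSpace V, SepClosedMetric m {q : V × V | E q.1 q.2}) :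
    EmbedsInNonArchPolishGroup (GraphProd E p) := by
  obtain ⟨m, hsep, hE⟩ := h
  let _ := m
  have : SecondCountableTopology V := UniformSpace.secondCountable_of_separable V
  refine embedsInNonArchPolishGroup_of_forall_eq_one
    (ι := Σ k : ℕ, (Fin k → countableBasis V) × (Fin k → ℕ))
    (fun δ => GraphProd.toCollapsed E p (fun i => (δ.2.1 i : Set V)) δ.2.2) fun g hker => ?_
  by_contra hg
  obtain ⟨k, U, c, hne⟩ := GraphProd.exists_toCollapsed_ne_one hE (isBasis_countableBasis V) hg
  exact hne (hker ⟨k, U, c⟩)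

/-- If there is a metric on the vertex set `V` inducing a separable topology in
which the edge relation `E_Γ` is closed, then the graph product `G(Γ, 𝔭)`
embeds, via an injective group homomorphism, into a non-Archimedean Polish
group. -/
theorem graphProd_embedsInNonArchPolishGroup_of_sepClosedMetric
    {V : Type} (E : V → V → Prop) (hEsym : Symmetric E)
    (p : V → ℕ) (hp : ∀ v, p v ≠ 0 → IsPrimePow (p v))
    (h : ∃ m : MetricSpace V, SepClosedMetric m {q : V × V | E q.1 q.2}) :
    EmbedsInNonArchPolishGroup (GraphProd E p) :=
  graphProd_embedsInNonArchPolishGroup_of_sepClosedMetric_general E p h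
end

section
/- Let Γ = (V, E_Γ) be a graph and 𝔭 : V → ω a graph colouring. Suppose that V admits a metric d inducing a separable topology in which E_Γ is a closed subset of V × V. Then V admits an ultrametric d′ inducing a separable topology in which E_Γ is closed. -/
/-! A separable metric space is second countable; fix a countable basis `(B n)`. Recording which
`B n` contain a point injects `V` into the Cantor space `ℕ → Bool`, and pulling back the ultrametric
of the Cantor space gives an ultrametric whose topology is generated by the sets `B n` and their
complements. That topology is second countable and finer than the original one, so a set closed in
`V × V` for the original metric stays closed. -/

open TopologicalSpace Topology Function Set

section MemCode

variable {V : Type*}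

open Classical in
noncomputable def memCode (B : ℕ → Set V) (x : V) : ℕ → Bool := fun n => decide (x ∈ B n)

variable [t : TopologicalSpace V] {B : ℕ → Set V}

theorem memCode_injective [T0Space V] (hB : IsTopologicalBasis (range B)) :
    Injective (memCode B) := by
  intro x y hxy
  rw [hB.eq_iff]
  rintro _ ⟨n, rfl⟩
  simpa [memCode] using congrFun hxy n

theorem induced_memCode_le (hB : IsTopologicalBasis (range B)) :
    induced (memCode B) inferInstance ≤ t := by
  rw [hB.eq_generateFrom]
  refine le_generateFrom ?_
  rintro _ ⟨n, rfl⟩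
  have hcylinder : IsOpen {f : ℕ → Bool | f n = true} :=
    (isOpen_discrete {true}).preimage (continuous_apply (A := fun _ => Bool) n)
  have hBn : B n = memCode B ⁻¹' {f | f n = true} := by
    ext x
    simp [memCode]
  rw [hBn]
  exact isOpen_induced hcylinder

end MemCode

theorem exists_ultrametric_le_of_secondCountable {V : Type*} [t : TopologicalSpace V] [T0Space V]
    [SecondCountableTopology V] :
    ∃ m : MetricSpace V, @IsUltrametricDist V m.toDist ∧
      @SecondCountableTopology V m.toUniformSpace.toTopologicalSpace ∧
      m.toUniformSpace.toTopologicalSpace ≤ t := by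
  obtain ⟨B, hB⟩ := exists_seq_basis V
  let _ : MetricSpace (ℕ → Bool) := PiNat.metricSpace
  let m : MetricSpace V := .induced (memCode B) (memCode_injective hB) inferInstance
  refine ⟨m, ?_, secondCountableTopology_induced V (ℕ → Bool) (memCode B),
    induced_memCode_le hB⟩
  let _ := m
  exact ⟨fun x y z => PiNat.dist_triangle_nonarch (memCode B x) (memCode B y) (memCode B z)⟩

theorem IsClosed.mono_prod {X Y : Type*} {s : Set (X × Y)} {tX tX' : TopologicalSpace X}
    {tY tY' : TopologicalSpace Y}
    (hs : IsClosed[@instTopologicalSpaceProd X Y tX tY] s) (hX : tX' ≤ tX) (hY : tY' ≤ tY) :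
    IsClosed[@instTopologicalSpaceProd X Y tX' tY'] s :=
  hs.mono (inf_le_inf (induced_mono hX) (induced_mono hY))

theorem exists_ultrametric_sepClosed_of_sepClosedMetric_general
    {V : Type} (E : V → V → Prop)
    (h : ∃ m : MetricSpace V, SepClosedMetric m {q : V × V | E q.1 q.2}) :
    ∃ m' : MetricSpace V,
      (∀ x y z : V, m'.dist x z ≤ max (m'.dist x y) (m'.dist y z)) ∧
      SepClosedMetric m' {q : V × V | E q.1 q.2} := by
  obtain ⟨m, hsep, hclosed⟩ := h
  let _ := m
  have : SecondCountableTopology V := UniformSpace.secondCountable_of_separable V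
  obtain ⟨m', hultra, hsecond, hle⟩ := exists_ultrametric_le_of_secondCountable (V := V)
  exact ⟨m', hultra.dist_triangle_max, @SecondCountableTopology.to_separableSpace V _ hsecond,
    hclosed.mono_prod hle hle⟩

/-- **Lemma (part 1).** Let `Γ = (V, E_Γ)` be a graph and `𝔭 : V → ω` a graph
colouring.  If `V` admits a metric `d` inducing a separable topology in which
`E_Γ` is closed, then `V` admits an ultrametric `d′` with the same
properties. -/
theorem exists_ultrametric_sepClosed_of_sepClosedMetric
    {V : Type} (E : V → V → Prop) (hEsym : Symmetric E) (p : V → ℕ)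
    (h : ∃ m : MetricSpace V, SepClosedMetric m {q : V × V | E q.1 q.2}) :
    ∃ m' : MetricSpace V,
      (∀ x y z : V, m'.dist x z ≤ max (m'.dist x y) (m'.dist y z)) ∧
      SepClosedMetric m' {q : V × V | E q.1 q.2} :=
  exists_ultrametric_sepClosed_of_sepClosedMetric_general E h
end

section
/- Let Γ(ℵ₁) be the ℵ₁-half graph: the graph with vertex set {a_α : α < ω₁} ∪ {b_β : β < ω₁} (all vertices distinct) and edge relation given by a_α E b_β if and only if α < β. Then there is no metric on the vertex set of Γ(ℵ₁) which induces a separable topology in which the edge relation E is a closed subset of the product of the vertex set with itself. -/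
/-- The countable ordinals, i.e. the ordinals below `ω₁`. -/
def CountableOrdinals : Type 1 := {o : Ordinal // o < (Cardinal.aleph 1).ord}

/-- The vertex set of the `ℵ₁`-half graph: two disjoint copies
`{a_α : α < ω₁}` (left) and `{b_β : β < ω₁}` (right) of the countable
ordinals. -/
def HalfGraphVertices : Type 1 := CountableOrdinals ⊕ CountableOrdinals

/-- The edge relation of the `ℵ₁`-half graph: `a_α E b_β` iff `α < β`
(symmetrized), and no other edges. -/
def halfGraphEdge : HalfGraphVertices → HalfGraphVertices → Prop
  | Sum.inl a, Sum.inr b => a.1 < b.1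
  | Sum.inr b, Sum.inl a => a.1 < b.1
  | _, _ => False

open Set TopologicalSpace

theorem IsClosed.exists_ne_notMem_prod_of_uncountable {X Y ι : Type*} [TopologicalSpace X]
    [TopologicalSpace Y] [SecondCountableTopology X] [SecondCountableTopology Y] [Uncountable ι]
    {E : Set (X × Y)} (hE : IsClosed E) {a : ι → X} {b : ι → Y} (hab : ∀ i, (a i, b i) ∉ E) :
    ∃ i j, i ≠ j ∧ (a i, b j) ∉ E ∧ (a j, b i) ∉ E := by
  obtain ⟨BX, hBXc, -, hBX⟩ := exists_countable_basis X
  obtain ⟨BY, hBYc, -, hBY⟩ := exists_countable_basis Y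
  set B := image2 (· ×ˢ ·) BX BY
  have hbox : ∀ i, ∃ t ∈ B, (a i, b i) ∈ t ∧ t ⊆ Eᶜ := fun i =>
    (hBX.prod hBY).mem_nhds_iff.1 (hE.isOpen_compl.mem_nhds (hab i))
  choose t htB hmem hsub using hbox
  have : Countable B := (hBXc.image2 hBYc _).to_subtype
  obtain ⟨i, j, htij, hij⟩ := Function.not_injective_iff.1 <|
    not_injective_uncountable_countable fun i => (⟨t i, htB i⟩ : B)
  replace htij : t i = t j := congrArg Subtype.val htij
  obtain ⟨U, -, V, -, hUV : U ×ˢ V = t i⟩ := htB i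
  have hUVE : U ×ˢ V ⊆ Eᶜ := hUV ▸ hsub i
  have hi : (a i, b i) ∈ U ×ˢ V := hUV ▸ hmem i
  have hj : (a j, b j) ∈ U ×ˢ V := hUV ▸ htij ▸ hmem j
  exact ⟨i, j, hij, hUVE ⟨hi.1, hj.2⟩, hUVE ⟨hj.1, hi.2⟩⟩

instance CountableOrdinals.instUncountable : Uncountable CountableOrdinals := by
  rw [← Cardinal.aleph0_lt_mk_iff]
  have : Cardinal.mk CountableOrdinals = Cardinal.lift (Cardinal.aleph 1).ord.card :=
    Cardinal.mk_Iio_ordinal _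
  simp [this]

/-- There is no metric on the vertex set of the `ℵ₁`-half graph `Γ(ℵ₁)` which
induces a separable topology in which the edge relation is a closed subset of
the product of the vertex set with itself. -/
theorem no_sepClosedMetric_halfGraph_aleph1 :
    ¬ ∃ m : MetricSpace HalfGraphVertices,
      SepClosedMetric m {q : HalfGraphVertices × HalfGraphVertices | halfGraphEdge q.1 q.2} := by
  rintro ⟨m, hsep, hclosed⟩
  let := m
  have : SeparableSpace HalfGraphVertices := hsep
  obtain ⟨α, β, hne, hαβ, hβα⟩ := hclosed.exists_ne_notMem_prod_of_uncountable
    (a := Sum.inl) (b := Sum.inr) fun α => lt_irrefl α.1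
  exact hne (Subtype.ext ((not_lt.1 hβα).antisymm (not_lt.1 hαβ)))
end
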